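/- arXiv:1902.05180 — 4 statements merged into one kernel-verified Lean document; each statement's English description precedes it below -/
import Mathlib

section
/- ρ_c = 1 if and only if x_i = y_i for all i, provided the sequences are not both constant (so that the denominator is nonzero). -/
/-!
Writing `x i - y i = (x i - μX) - (y i - μY) + (μX - μY)` and using that centred data sum to zero,
the mean squared difference `(1/N) ∑ (x i - y i)²` equals `σX² + σY² + (μX - μY)² - 2 σXY`,
i.e. the denominator of `ρc` minus its numerator. So `ρc = 1` exactly when the mean squared
difference vanishes, that is, when `x = y`.
-/

open Finset

variable {ι : Type*} [Fintype ι]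

lemma sum_sub_sum_div_card_eq_zero (x : ι → ℝ) :
    ∑ i, (x i - (∑ j, x j) / Fintype.card ι) = 0 := by
  cases isEmpty_or_nonempty ι
  · simp
  rw [sum_sub_distrib, sum_const, card_univ, nsmul_eq_mul, mul_div_cancel₀ _ (by positivity),
    sub_self]

lemma sum_sub_sq_eq_of_mean (x y : ι → ℝ) (μX μY : ℝ)
    (hμX : μX = (∑ i, x i) / Fintype.card ι) (hμY : μY = (∑ i, y i) / Fintype.card ι) :
    ∑ i, (x i - y i) ^ 2 = ∑ i, (x i - μX) ^ 2 + ∑ i, (y i - μY) ^ 2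
      - 2 * ∑ i, (x i - μX) * (y i - μY) + Fintype.card ι * (μX - μY) ^ 2 := by
  have hx : ∑ i, (x i - μX) = 0 := hμX ▸ sum_sub_sum_div_card_eq_zero x
  have hy : ∑ i, (y i - μY) = 0 := hμY ▸ sum_sub_sum_div_card_eq_zero y
  calc ∑ i, (x i - y i) ^ 2
      = ∑ i, ((x i - μX) ^ 2 + (y i - μY) ^ 2 - 2 * ((x i - μX) * (y i - μY))
          + 2 * (μX - μY) * ((x i - μX) - (y i - μY)) + (μX - μY) ^ 2) :=
        sum_congr rfl fun i _ => by ring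
    _ = _ := by
        simp only [sum_add_distrib, sum_sub_distrib, ← mul_sum, hx, hy, sum_const, card_univ,
          nsmul_eq_mul]
        ring

lemma sum_sub_sq_eq_zero_iff (x y : ι → ℝ) : ∑ i, (x i - y i) ^ 2 = 0 ↔ ∀ i, x i = y i := by
  simp only [sum_eq_zero_iff_of_nonneg fun i _ => sq_nonneg (x i - y i), mem_univ,
    true_implies, sq_eq_zero_iff, sub_eq_zero]

theorem ccc_eq_one_iff (N : ℕ) (hN : 0 < N) (x y : Fin N → ℝ)
    (μX μY σX2 σY2 σXY ρc : ℝ)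
    (hμX : μX = (∑ i, x i) / N)
    (hμY : μY = (∑ i, y i) / N)
    (hσX2 : σX2 = (∑ i, (x i - μX) ^ 2) / N)
    (hσY2 : σY2 = (∑ i, (y i - μY) ^ 2) / N)
    (hσXY : σXY = (∑ i, (x i - μX) * (y i - μY)) / N)
    (hden : 0 < σX2 + σY2 + (μX - μY) ^ 2)
    (hρc : ρc = 2 * σXY / (σX2 + σY2 + (μX - μY) ^ 2)) :
    ρc = 1 ↔ ∀ i, x i = y i := by
  have hN' : (N : ℝ) ≠ 0 := by positivity
  have hmsd : (∑ i, (x i - y i) ^ 2) / N = σX2 + σY2 + (μX - μY) ^ 2 - 2 * σXY := by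
    rw [sum_sub_sq_eq_of_mean x y μX μY (by simpa using hμX) (by simpa using hμY),
      hσX2, hσY2, hσXY, Fintype.card_fin]
    field_simp
    ring
  rw [hρc, div_eq_one_iff_eq hden.ne', eq_comm, ← sub_eq_zero, ← hmsd, div_eq_zero_iff,
    or_iff_left hN', sum_sub_sq_eq_zero_iff]
end

section
/- For a gold standard sequence y with variance σ_G² > 0 and fixed MSE value M ≥ 0, among all error sequences d with (1/N)Σd_i² = M, the covariance between x = y + d and y is minimised when d_i = −√(M/σ_G²)·(y_i − μ_Y), and the minimum covariance equals σ_G² − √(σ_G²·M). -/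
/-!
Centring `y + d` costs nothing when it is paired with the centred `y`, so the covariance of
`y + d` and `y` is `σ_G²` plus the average of `d i * (y i - μ_Y)`. By Cauchy–Schwarz that average
is at least `-√(M σ_G²)`, with equality for a nonpositive multiple of `y - μ_Y`; the MSE
constraint fixes the multiple as `√(M / σ_G²)`.
-/

open Finset Real

section
variable {ι : Type*} [Fintype ι]

lemma sum_sub_average_eq_zero (y : ι → ℝ) :
    ∑ i, (y i - (∑ j, y j) / Fintype.card ι) = 0 := by
  rcases isEmpty_or_nonempty ι with _ | _
  · simp
  · simp [sum_sub_distrib, mul_div_cancel₀]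

lemma sum_sub_mul_eq_sum_mul_of_sum_eq_zero (x c : ι → ℝ) (a : ℝ) (hc : ∑ i, c i = 0) :
    ∑ i, (x i - a) * c i = ∑ i, x i * c i := by
  simp [sub_mul, sum_sub_distrib, ← mul_sum, hc]

lemma sum_centered_add_mul_centered (y d : ι → ℝ) :
    ∑ i, ((y i + d i) - (∑ j, (y j + d j)) / Fintype.card ι) * (y i - (∑ j, y j) / Fintype.card ι)
      = ∑ i, (y i - (∑ j, y j) / Fintype.card ι) ^ 2
        + ∑ i, d i * (y i - (∑ j, y j) / Fintype.card ι) := by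
  have hc := sum_sub_average_eq_zero y
  rw [sum_sub_mul_eq_sum_mul_of_sum_eq_zero _ _ _ hc]
  simp only [sq, sum_sub_mul_eq_sum_mul_of_sum_eq_zero _ _ _ hc, add_mul, sum_add_distrib]

lemma neg_sqrt_mul_le_sum_mul_div (d c : ι → ℝ) (n : ℝ) :
    -√((∑ i, d i ^ 2) / n * ((∑ i, c i ^ 2) / n)) ≤ (∑ i, d i * c i) / n := by
  refine neg_sqrt_le_of_sq_le ?_
  rw [div_pow, div_mul_div_comm, ← sq]
  exact div_le_div_of_nonneg_right (sum_mul_sq_le_sq_mul_sq _ _ _) (sq_nonneg n)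

end

lemma sqrt_div_mul_self {σ : ℝ} (hσ : 0 ≤ σ) (M : ℝ) : √(M / σ) * σ = √(σ * M) := by
  rw [sqrt_div' M hσ, sqrt_mul hσ, div_mul_eq_mul_div, mul_div_assoc, div_sqrt, mul_comm]

theorem cov_min_given_mse_general (N : ℕ) (y : Fin N → ℝ)
    (μY σG2 M : ℝ)
    (hμY : μY = (∑ i, y i) / N)
    (hσG2 : σG2 = (∑ i, (y i - μY) ^ 2) / N)
    (hσG2pos : 0 < σG2)
    (hM : 0 ≤ M) :
    (∀ d : Fin N → ℝ, (∑ i, d i ^ 2) / N = M →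
      σG2 - Real.sqrt (σG2 * M) ≤
        (∑ i, ((y i + d i) - (∑ j, (y j + d j)) / N) * (y i - μY)) / N) ∧
    (∀ d : Fin N → ℝ, (∀ i, d i = -(Real.sqrt (M / σG2) * (y i - μY))) →
      (∑ i, d i ^ 2) / N = M ∧
      (∑ i, ((y i + d i) - (∑ j, (y j + d j)) / N) * (y i - μY)) / N =
        σG2 - Real.sqrt (σG2 * M)) := by
  have hcov (d : Fin N → ℝ) :
      (∑ i, ((y i + d i) - (∑ j, (y j + d j)) / N) * (y i - μY)) / N
        = σG2 + (∑ i, d i * (y i - μY)) / N := by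
    have := sum_centered_add_mul_centered y d
    rw [Fintype.card_fin, ← hμY] at this
    rw [this, add_div, ← hσG2]
  refine ⟨fun d hd => ?_, fun d hd => ?_⟩
  · have hcs := neg_sqrt_mul_le_sum_mul_div d (fun i => y i - μY) N
    rw [hd, ← hσG2, mul_comm] at hcs
    rw [hcov]
    linarith
  · have hd2 : (∑ i, d i ^ 2) / N = M / σG2 * σG2 := by
      simp only [hd, neg_sq, mul_pow, ← mul_sum, mul_div_assoc, ← hσG2,
        sq_sqrt (div_nonneg hM hσG2pos.le)]
    have hdc : (∑ i, d i * (y i - μY)) / N = -(√(M / σG2) * σG2) := by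
      simp only [hd, neg_mul, mul_assoc, ← sq, sum_neg_distrib, ← mul_sum, neg_div, mul_div_assoc,
        ← hσG2]
    rw [hcov, hd2, hdc, div_mul_cancel₀ M hσG2pos.ne', sqrt_div_mul_self hσG2pos.le,
      ← sub_eq_add_neg]
    exact ⟨rfl, rfl⟩

theorem cov_min_given_mse (N : ℕ) (hN : 0 < N) (y : Fin N → ℝ)
    (μY σG2 M : ℝ)
    (hμY : μY = (∑ i, y i) / N)
    (hσG2 : σG2 = (∑ i, (y i - μY) ^ 2) / N)
    (hσG2pos : 0 < σG2)
    (hM : 0 ≤ M) :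
    (∀ d : Fin N → ℝ, (∑ i, d i ^ 2) / N = M →
      σG2 - Real.sqrt (σG2 * M) ≤
        (∑ i, ((y i + d i) - (∑ j, (y j + d j)) / N) * (y i - μY)) / N) ∧
    (∀ d : Fin N → ℝ, (∀ i, d i = -(Real.sqrt (M / σG2) * (y i - μY))) →
      (∑ i, d i ^ 2) / N = M ∧
      (∑ i, ((y i + d i) - (∑ j, (y j + d j)) / N) * (y i - μY)) / N =
        σG2 - Real.sqrt (σG2 * M)) :=
  cov_min_given_mse_general N y μY σG2 M hμY hσG2 hσG2pos hM
end

section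
/- For any gold standard y with σ_G² > 0 and any error sequence d with (1/N)Σd_i² = M, writing t = √(M/σ_G²), the concordance correlation coefficient between x = y + d and y satisfies ρ_c ≤ 2(1+t)/(1+(1+t)²). -/
/-!
Write `x = y + d`. Centring splits `x - μ_X` as `(y - μ_Y) + (d - μ_D)`, and since
`σ_D² + μ_D² = M` the denominator of `ρ_c` collapses to `2σ_{XY} + M`. Hence
`ρ_c = 1 - M / (2σ_{XY} + M)` is increasing in `σ_{XY} = σ_G² + cov(d, y)`, and Cauchy–Schwarz
gives `cov(d, y) ≤ σ_D σ_G ≤ √M σ_G = t σ_G²`. Substituting `σ_{XY} ≤ σ_G²(1 + t)` and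
`M = t² σ_G²` yields the bound.
-/

open Finset

namespace Empirical

variable {ι : Type*} [Fintype ι]

noncomputable def mean (x : ι → ℝ) : ℝ := (∑ i, x i) / Fintype.card ι

noncomputable def cov (x y : ι → ℝ) : ℝ :=
  (∑ i, (x i - mean x) * (y i - mean y)) / Fintype.card ι

theorem mean_add (x y : ι → ℝ) : mean (x + y) = mean x + mean y := by
  simp only [mean, Pi.add_apply, sum_add_distrib, add_div]

theorem cov_comm (x y : ι → ℝ) : cov x y = cov y x := by
  simp only [cov, mul_comm]

theorem cov_self (x : ι → ℝ) : cov x x = (∑ i, (x i - mean x) ^ 2) / Fintype.card ι := by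
  simp only [cov, sq]

theorem cov_self_nonneg (x : ι → ℝ) : 0 ≤ cov x x := by
  rw [cov_self]; positivity

theorem cov_add_left (x y z : ι → ℝ) : cov (x + y) z = cov x z + cov y z := by
  simp only [cov, mean_add, Pi.add_apply, ← add_div, ← sum_add_distrib]
  congr 1
  exact sum_congr rfl fun i _ ↦ by ring

theorem cov_add_right (x y z : ι → ℝ) : cov x (y + z) = cov x y + cov x z := by
  rw [cov_comm, cov_add_left, cov_comm y, cov_comm z]

theorem cov_self_add_mean_sq (x : ι → ℝ) : cov x x + mean x ^ 2 = mean (x ^ 2) := by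
  rcases isEmpty_or_nonempty ι with hι | hι
  · simp [cov, mean]
  have hn : (Fintype.card ι : ℝ) ≠ 0 := by positivity
  have hsum : ∑ i, (x i - mean x) ^ 2 = ∑ i, x i ^ 2 - Fintype.card ι * mean x ^ 2 := by
    simp only [sub_sq, sum_add_distrib, sum_sub_distrib, ← sum_mul, ← mul_sum, sum_const,
      card_univ, nsmul_eq_mul]
    rw [mean]
    field_simp
    ring
  rw [cov_self, hsum, mean, mean]
  simp only [Pi.pow_apply]
  field_simp
  ring

theorem cov_self_le_mean_sq (x : ι → ℝ) : cov x x ≤ mean (x ^ 2) := by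
  rw [← cov_self_add_mean_sq]
  exact le_add_of_nonneg_right (sq_nonneg _)

theorem cov_sq_le_cov_self_mul_cov_self (x y : ι → ℝ) : cov x y ^ 2 ≤ cov x x * cov y y := by
  simp only [cov, div_pow, div_mul_div_comm, ← sq]
  gcongr
  exact sum_mul_sq_le_sq_mul_sq _ _ _

theorem cov_add_self_add_cov_self_add_sq_mean_sub (y d : ι → ℝ) :
    cov (y + d) (y + d) + cov y y + (mean (y + d) - mean y) ^ 2
      = 2 * cov (y + d) y + mean (d ^ 2) := by
  rw [← cov_self_add_mean_sq d, mean_add, cov_add_left, cov_add_right, cov_add_right,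
    cov_add_left, cov_comm y d]
  ring

theorem cov_add_le (y d : ι → ℝ) {t : ℝ} (ht : 0 ≤ t) (hd : cov d d ≤ t ^ 2 * cov y y) :
    cov (y + d) y ≤ cov y y * (1 + t) := by
  have hy := cov_self_nonneg y
  have hsq : cov d y ^ 2 ≤ (t * cov y y) ^ 2 :=
    calc cov d y ^ 2 ≤ cov d d * cov y y := cov_sq_le_cov_self_mul_cov_self d y
      _ ≤ t ^ 2 * cov y y * cov y y := by gcongr
      _ = (t * cov y y) ^ 2 := by ring
  have hdy : cov d y ≤ t * cov y y := (abs_le_of_sq_le_sq' hsq (by positivity)).2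
  rw [cov_add_left]
  linarith

end Empirical

theorem two_mul_div_two_mul_add_le {s σ t : ℝ} (hs : s ≤ σ * (1 + t))
    (hpos : 0 < 2 * s + t ^ 2 * σ) :
    2 * s / (2 * s + t ^ 2 * σ) ≤ 2 * (1 + t) / (1 + (1 + t) ^ 2) := by
  rw [div_le_div_iff₀ hpos (by positivity)]
  nlinarith [mul_le_mul_of_nonneg_left hs (sq_nonneg t)]

open Empirical in
theorem ccc_upper_bound_given_mse_general (N : ℕ) (y d : Fin N → ℝ)
    (μY σG2 M t : ℝ) (x : Fin N → ℝ)
    (hx : ∀ i, x i = y i + d i)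
    (hμY : μY = (∑ i, y i) / N)
    (hσG2 : σG2 = (∑ i, (y i - μY) ^ 2) / N)
    (hσG2pos : 0 < σG2)
    (hd : (∑ i, d i ^ 2) / N = M)
    (ht : t = Real.sqrt (M / σG2))
    (μX σX2 σXY ρc : ℝ)
    (hμX : μX = (∑ i, x i) / N)
    (hσX2 : σX2 = (∑ i, (x i - μX) ^ 2) / N)
    (hσXY : σXY = (∑ i, (x i - μX) * (y i - μY)) / N)
    (hρc : ρc = 2 * σXY / (σX2 + σG2 + (μX - μY) ^ 2)) :
    ρc ≤ 2 * (1 + t) / (1 + (1 + t) ^ 2) := by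
  obtain rfl : x = y + d := funext hx
  have hcard : (Fintype.card (Fin N) : ℝ) = N := by simp
  have hμY' : μY = mean y := by rw [hμY, mean, hcard]
  have hμX' : μX = mean (y + d) := by rw [hμX, mean, hcard]
  have hσG2' : σG2 = cov y y := by rw [hσG2, cov_self, hμY', hcard]
  have hσX2' : σX2 = cov (y + d) (y + d) := by rw [hσX2, cov_self, hμX', hcard]
  have hσXY' : σXY = cov (y + d) y := by rw [hσXY, cov, hμX', hμY', hcard]
  have hM : M = mean (d ^ 2) := by simp only [← hd, mean, hcard, Pi.pow_apply]
  have hM0 : 0 ≤ M := by rw [← hd]; positivity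
  have hMt : M = t ^ 2 * σG2 := by
    rw [ht, Real.sq_sqrt (div_nonneg hM0 hσG2pos.le),
      div_mul_cancel₀ _ hσG2pos.ne']
  have hden := cov_add_self_add_cov_self_add_sq_mean_sub y d
  rw [← hσX2', ← hσG2', ← hσXY', ← hμX', ← hμY', ← hM, hMt] at hden
  have hσX2nonneg : 0 ≤ σX2 := hσX2' ▸ cov_self_nonneg _
  rw [hρc, hden]
  refine two_mul_div_two_mul_add_le ?_ (by rw [← hden]; positivity)
  rw [hσXY', hσG2']
  refine cov_add_le y d (ht ▸ Real.sqrt_nonneg _) ?_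
  rw [← hσG2', ← hMt, hM]
  exact cov_self_le_mean_sq d

theorem ccc_upper_bound_given_mse (N : ℕ) (hN : 0 < N) (y d : Fin N → ℝ)
    (μY σG2 M t : ℝ) (x : Fin N → ℝ)
    (hx : ∀ i, x i = y i + d i)
    (hμY : μY = (∑ i, y i) / N)
    (hσG2 : σG2 = (∑ i, (y i - μY) ^ 2) / N)
    (hσG2pos : 0 < σG2)
    (hM : 0 ≤ M)
    (hd : (∑ i, d i ^ 2) / N = M)
    (ht : t = Real.sqrt (M / σG2))
    (μX σX2 σXY ρc : ℝ)
    (hμX : μX = (∑ i, x i) / N)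
    (hσX2 : σX2 = (∑ i, (x i - μX) ^ 2) / N)
    (hσXY : σXY = (∑ i, (x i - μX) * (y i - μY)) / N)
    (hρc : ρc = 2 * σXY / (σX2 + σG2 + (μX - μY) ^ 2)) :
    ρc ≤ 2 * (1 + t) / (1 + (1 + t) ^ 2) :=
  ccc_upper_bound_given_mse_general N y d μY σG2 M t x hx hμY hσG2 hσG2pos hd ht μX σX2 σXY ρc hμX
    hσX2 hσXY hρc
end

section
/- For any gold standard y with σ_G² > 0 and any error sequence d with (1/N)Σd_i² = M, writing t = √(M/σ_G²), the concordance correlation coefficient between x = y + d and y satisfies ρ_c ≥ 2(1−t)/(1+(1−t)²). -/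
/-!
Write `x = y + d`. The denominator of `ρ_c` is the mean squared error `M = t² σ_G²` plus
`2 σ_{XY}`, and by Cauchy–Schwarz
`σ_{XY} = σ_G² + cov(d, y) ≥ σ_G² - √M σ_G = (1 - t) σ_G²`.
Since `u ↦ 2u / (M + 2u)` is increasing, `ρ_c ≥ 2(1 - t) / (t² + 2(1 - t))`, and
`t² + 2(1 - t) = 1 + (1 - t)²`.
-/

open Finset

section SampleStatistics

variable {ι : Type*} [Fintype ι]

noncomputable def sampleMean (x : ι → ℝ) : ℝ := (∑ i, x i) / Fintype.card ι

noncomputable def sampleVar (x : ι → ℝ) : ℝ :=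
  (∑ i, (x i - sampleMean x) ^ 2) / Fintype.card ι

noncomputable def sampleCov (x y : ι → ℝ) : ℝ :=
  (∑ i, (x i - sampleMean x) * (y i - sampleMean y)) / Fintype.card ι

noncomputable def concordanceCorr (x y : ι → ℝ) : ℝ :=
  2 * sampleCov x y / (sampleVar x + sampleVar y + (sampleMean x - sampleMean y) ^ 2)

lemma card_mul_sampleMean (x : ι → ℝ) : Fintype.card ι * sampleMean x = ∑ i, x i := by
  rcases isEmpty_or_nonempty ι with hι | hι
  · simp
  · exact mul_div_cancel₀ _ (by positivity)

lemma sum_sub_sampleMean (x : ι → ℝ) : ∑ i, (x i - sampleMean x) = 0 := by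
  rw [sum_sub_distrib, sum_const, card_univ, nsmul_eq_mul, card_mul_sampleMean, sub_self]

lemma sampleCov_eq_sum_mul (x y : ι → ℝ) :
    sampleCov x y = (∑ i, x i * (y i - sampleMean y)) / Fintype.card ι := by
  simp only [sampleCov, sub_mul, sum_sub_distrib]
  rw [← mul_sum, sum_sub_sampleMean, mul_zero, sub_zero]

lemma sampleVar_eq_sampleCov (x : ι → ℝ) : sampleVar x = sampleCov x x := by
  simp only [sampleVar, sampleCov, sq]

lemma sampleCov_add_left (x d y : ι → ℝ) :
    sampleCov (x + d) y = sampleCov x y + sampleCov d y := by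
  simp only [sampleCov_eq_sum_mul, Pi.add_apply, add_mul, sum_add_distrib, add_div]

lemma sampleMean_sub_sq (x y : ι → ℝ) :
    sampleMean ((x - y) ^ 2) =
      sampleVar x + sampleVar y - 2 * sampleCov x y + (sampleMean x - sampleMean y) ^ 2 := by
  rcases isEmpty_or_nonempty ι with hι | hι
  · simp [sampleMean, sampleVar, sampleCov]
  have hsum : ∑ i, (x i - y i) ^ 2 =
      ∑ i, (x i - sampleMean x) ^ 2 + ∑ i, (y i - sampleMean y) ^ 2
        - 2 * ∑ i, (x i - sampleMean x) * (y i - sampleMean y)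
        + Fintype.card ι * (sampleMean x - sampleMean y) ^ 2 := by
    calc ∑ i, (x i - y i) ^ 2
        = ∑ i, ((x i - sampleMean x) ^ 2 + (y i - sampleMean y) ^ 2
            - 2 * ((x i - sampleMean x) * (y i - sampleMean y))
            + 2 * (sampleMean x - sampleMean y) * ((x i - sampleMean x) - (y i - sampleMean y))
            + (sampleMean x - sampleMean y) ^ 2) :=
          sum_congr rfl fun i _ => by ring
      _ = _ := by
          simp only [sum_add_distrib, sum_sub_distrib, ← mul_sum, sum_const, card_univ,
            nsmul_eq_mul, card_mul_sampleMean]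
          ring
  have hmean : sampleMean ((x - y) ^ 2) = (∑ i, (x i - y i) ^ 2) / Fintype.card ι := rfl
  have hcard : (Fintype.card ι : ℝ) ≠ 0 := by positivity
  rw [hmean, hsum, sampleVar, sampleVar, sampleCov]
  field_simp

lemma concordanceCorr_eq (x y : ι → ℝ) :
    concordanceCorr x y = 2 * sampleCov x y / (sampleMean ((x - y) ^ 2) + 2 * sampleCov x y) := by
  rw [concordanceCorr, sampleMean_sub_sq]
  ring_nf

lemma sampleCov_sq_le (d y : ι → ℝ) :
    sampleCov d y ^ 2 ≤ sampleMean (d ^ 2) * sampleVar y :=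
  calc sampleCov d y ^ 2
      = (∑ i, d i * (y i - sampleMean y)) ^ 2 / (Fintype.card ι : ℝ) ^ 2 := by
        rw [sampleCov_eq_sum_mul, div_pow]
    _ ≤ (∑ i, d i ^ 2) * (∑ i, (y i - sampleMean y) ^ 2) / (Fintype.card ι : ℝ) ^ 2 := by
        gcongr
        exact sum_mul_sq_le_sq_mul_sq univ d (fun i => y i - sampleMean y)
    _ = sampleMean (d ^ 2) * sampleVar y := by
        rw [sq (Fintype.card ι : ℝ), mul_div_mul_comm]
        rfl

lemma two_mul_one_sub_div_le {t σ c : ℝ} (hσ : 0 < σ) (hc : (1 - t) * σ ≤ c) :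
    2 * (1 - t) / (1 + (1 - t) ^ 2) ≤ 2 * c / (t ^ 2 * σ + 2 * c) := by
  have hden : 0 < t ^ 2 * σ + 2 * c := by nlinarith [sq_nonneg t, sq_nonneg (1 - t)]
  rw [div_le_div_iff₀ (by positivity) hden]
  nlinarith [mul_le_mul_of_nonneg_left hc (sq_nonneg t)]

theorem le_concordanceCorr_add (y d : ι → ℝ) (hy : 0 < sampleVar y) {t : ℝ}
    (ht : t = √(sampleMean (d ^ 2) / sampleVar y)) :
    2 * (1 - t) / (1 + (1 - t) ^ 2) ≤ concordanceCorr (y + d) y := by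
  have ht0 : 0 ≤ t := ht ▸ Real.sqrt_nonneg _
  have hmse : t ^ 2 * sampleVar y = sampleMean (d ^ 2) := by
    have : 0 ≤ sampleMean (d ^ 2) := by simp only [sampleMean, Pi.pow_apply]; positivity
    rw [ht, Real.sq_sqrt (by positivity), div_mul_cancel₀ _ hy.ne']
  have hcov : -(t * sampleVar y) ≤ sampleCov d y := by
    refine (abs_le_of_sq_le_sq' ?_ (by positivity)).1
    calc sampleCov d y ^ 2 ≤ sampleMean (d ^ 2) * sampleVar y := sampleCov_sq_le d y
      _ = (t * sampleVar y) ^ 2 := by rw [← hmse]; ring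
  rw [concordanceCorr_eq, add_sub_cancel_left, ← hmse]
  refine two_mul_one_sub_div_le hy ?_
  rw [sampleCov_add_left, ← sampleVar_eq_sampleCov]
  linarith

end SampleStatistics

theorem ccc_lower_bound_given_mse_general (N : ℕ) (y d : Fin N → ℝ)
    (μY σG2 M t : ℝ) (x : Fin N → ℝ)
    (hx : ∀ i, x i = y i + d i)
    (hμY : μY = (∑ i, y i) / N)
    (hσG2 : σG2 = (∑ i, (y i - μY) ^ 2) / N)
    (hσG2pos : 0 < σG2)
    (hd : (∑ i, d i ^ 2) / N = M)
    (ht : t = Real.sqrt (M / σG2))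
    (μX σX2 σXY ρc : ℝ)
    (hμX : μX = (∑ i, x i) / N)
    (hσX2 : σX2 = (∑ i, (x i - μX) ^ 2) / N)
    (hσXY : σXY = (∑ i, (x i - μX) * (y i - μY)) / N)
    (hρc : ρc = 2 * σXY / (σX2 + σG2 + (μX - μY) ^ 2)) :
    2 * (1 - t) / (1 + (1 - t) ^ 2) ≤ ρc := by
  obtain rfl : x = y + d := funext hx
  have hσ : σG2 = sampleVar y := by
    simp only [hσG2, hμY, sampleVar, sampleMean, Fintype.card_fin]
  have hρ : ρc = concordanceCorr (y + d) y := by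
    simp only [hρc, hσXY, hσX2, hσ, hμX, hμY, concordanceCorr, sampleCov, sampleVar,
      sampleMean, Fintype.card_fin]
  have hM : M = sampleMean (d ^ 2) := by
    simp only [← hd, sampleMean, Pi.pow_apply, Fintype.card_fin]
  rw [hρ]
  exact le_concordanceCorr_add y d (hσ ▸ hσG2pos) (by rw [ht, hM, hσ])

theorem ccc_lower_bound_given_mse (N : ℕ) (hN : 0 < N) (y d : Fin N → ℝ)
    (μY σG2 M t : ℝ) (x : Fin N → ℝ)
    (hx : ∀ i, x i = y i + d i)
    (hμY : μY = (∑ i, y i) / N)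
    (hσG2 : σG2 = (∑ i, (y i - μY) ^ 2) / N)
    (hσG2pos : 0 < σG2)
    (hM : 0 ≤ M)
    (hd : (∑ i, d i ^ 2) / N = M)
    (ht : t = Real.sqrt (M / σG2))
    (μX σX2 σXY ρc : ℝ)
    (hμX : μX = (∑ i, x i) / N)
    (hσX2 : σX2 = (∑ i, (x i - μX) ^ 2) / N)
    (hσXY : σXY = (∑ i, (x i - μX) * (y i - μY)) / N)
    (hρc : ρc = 2 * σXY / (σX2 + σG2 + (μX - μY) ^ 2)) :
    2 * (1 - t) / (1 + (1 - t) ^ 2) ≤ ρc :=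
  ccc_lower_bound_given_mse_general N y d μY σG2 M t x hx hμY hσG2 hσG2pos hd ht μX σX2 σXY ρc hμX
    hσX2 hσXY hρc
end
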